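/- Let p, q, r, ε be real numbers with 0 < p ≤ 1, 0 < q < 1, r > 1, p·q < 1/r, and ε ≤ log( 2p(1−q) / ( √((1−p)² + 4p(1−q)(1/r − p·q)) − (1−p) ) ). Then q·p + exp(−2ε)·(1−q)·p + exp(−ε)·(1−p) ≥ 1/r. -/

import Mathlib

theorem stmt_5 (p q r ε : ℝ) (hp0 : 0 < p) (hp1 : p ≤ 1) (hq0 : 0 < q) (hq1 : q < 1)
    (hr : 1 < r) (hpq : p * q < 1 / r)
    (hε : ε ≤ Real.log (2 * p * (1 - q) /
      (Real.sqrt ((1 - p) ^ 2 + 4 * p * (1 - q) * (1 / r - p * q)) - (1 - p)))) :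
    1 / r ≤ q * p + Real.exp (-(2 * ε)) * (1 - q) * p + Real.exp (-ε) * (1 - p) := by
  have ha : 0 < p * (1 - q) := mul_pos hp0 (by linarith)
  have hc : 0 < 1 / r - p * q := by linarith
  set s := Real.sqrt ((1 - p) ^ 2 + 4 * p * (1 - q) * (1 / r - p * q)) with hs_def
  have hs0 : 0 ≤ s := Real.sqrt_nonneg _
  have hs2 : s ^ 2 = (1 - p) ^ 2 + 4 * p * (1 - q) * (1 / r - p * q) := by
    rw [hs_def, Real.sq_sqrt]; nlinarith
  have hsb : 1 - p < s := by nlinarith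
  have hD : 0 < s - (1 - p) := by linarith
  have hx0 : (0:ℝ) < (s - (1 - p)) / (2 * (p * (1 - q))) := div_pos hD (by linarith)
  have hx : (s - (1 - p)) / (2 * (p * (1 - q))) ≤ Real.exp (-ε) := by
    have h2 : Real.log (2 * p * (1 - q) / (s - (1 - p)))
        = -Real.log ((s - (1 - p)) / (2 * (p * (1 - q)))) := by
      rw [← Real.log_inv]
      congr 1
      field_simp
    have h3 : Real.log ((s - (1 - p)) / (2 * (p * (1 - q)))) ≤ -ε := by
      rw [h2] at hε; linarith
    calc (s - (1 - p)) / (2 * (p * (1 - q)))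
        = Real.exp (Real.log ((s - (1 - p)) / (2 * (p * (1 - q))))) := (Real.exp_log hx0).symm
      _ ≤ Real.exp (-ε) := Real.exp_le_exp.mpr h3
  have hroot : p * (1 - q) * ((s - (1 - p)) / (2 * (p * (1 - q)))) ^ 2
      + (1 - p) * ((s - (1 - p)) / (2 * (p * (1 - q)))) = 1 / r - p * q := by
    have hr0 : r ≠ 0 := by positivity
    have hq' : 1 - q ≠ 0 := by linarith
    field_simp
    linear_combination r * hs2
      + 4 * p * (1 - q) * mul_inv_cancel₀ hr0
  have he2 : Real.exp (-(2 * ε)) = Real.exp (-ε) ^ 2 := by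
    rw [sq, ← Real.exp_add]; ring_nf
  have hxpos : 0 < Real.exp (-ε) := Real.exp_pos _
  rw [he2]
  have key : p * (1 - q) * Real.exp (-ε) ^ 2 + (1 - p) * Real.exp (-ε)
      ≥ 1 / r - p * q := by
    nlinarith [mul_nonneg (sub_nonneg.mpr hx) (add_pos hxpos hx0).le, ha.le,
      mul_pos ha hx0]
  nlinarith [key]
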